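/- arXiv:1012.5430 — 7 statements merged into one kernel-verified Lean document; each statement's English description precedes it below -/
import Mathlib

section
/- Let n and L be integers with n ≤ L ≤ 2^(n/16) and L ≥ 2. Let b = ⌈2·log L / log(n / log L)⌉ (logarithms base 2). Then ⌊n/b⌋^b ≥ L. -/
/-- Claim 1 of the paper: for `n ≤ L ≤ 2^(n/16)`, `L ≥ 2`, and
`b = ⌈2 log L / log(n / log L)⌉` (logs base 2), we have `⌊n/b⌋^b ≥ L`. -/
theorem stmt0 (n L : ℕ) (hL2 : 2 ≤ L) (hnL : n ≤ L)
    (hLup : (L : ℝ) ≤ (2 : ℝ) ^ ((n : ℝ) / 16)) :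
    L ≤ (n / ⌈2 * Real.logb 2 L / Real.logb 2 ((n : ℝ) / Real.logb 2 L)⌉₊) ^
      ⌈2 * Real.logb 2 L / Real.logb 2 ((n : ℝ) / Real.logb 2 L)⌉₊ := by
  have hL1 : (2:ℝ) ≤ (L:ℝ) := by exact_mod_cast hL2
  set l := Real.logb 2 (L:ℝ) with hl
  have hl1 : 1 ≤ l := by
    have : Real.logb 2 2 ≤ l := Real.logb_le_logb_of_le (by norm_num) (by norm_num) hL1
    simpa using this
  have hl0 : 0 < l := lt_of_lt_of_le one_pos hl1
  have hln : 16 * l ≤ (n:ℝ) := by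
    have h1 : l ≤ Real.logb 2 ((2:ℝ) ^ ((n:ℝ)/16)) :=
      Real.logb_le_logb_of_le (by norm_num) (by positivity) hLup
    rw [Real.logb_rpow (by norm_num) (by norm_num)] at h1
    linarith
  set x := (n:ℝ) / l with hx
  have hx16 : 16 ≤ x := by
    rw [hx, le_div_iff₀ hl0]; linarith
  have hx0 : 0 < x := by linarith
  have hlogx4 : 4 ≤ Real.logb 2 x := by
    have h16 : Real.logb 2 (16:ℝ) ≤ Real.logb 2 x :=
      Real.logb_le_logb_of_le (by norm_num) (by norm_num) hx16
    have : Real.logb 2 (16:ℝ) = 4 := by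
      rw [show (16:ℝ) = 2 ^ (4:ℕ) by norm_num, Real.logb_pow]
      simp
    linarith
  have hlogx0 : 0 < Real.logb 2 x := by linarith
  have hxl : Real.logb 2 x ≤ l := by
    have hxL : x ≤ (L:ℝ) := by
      have : x ≤ (n:ℝ) := by
        rw [hx, div_le_iff₀ hl0]
        nlinarith [Nat.cast_nonneg (α := ℝ) n]
      have hnL' : (n:ℝ) ≤ (L:ℝ) := by exact_mod_cast hnL
      linarith
    exact Real.logb_le_logb_of_le (by norm_num) hx0 hxL
  set c := 2 * l / Real.logb 2 x with hc
  have hc2 : 2 ≤ c := by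
    rw [hc, le_div_iff₀ hlogx0]; linarith
  set b := ⌈c⌉₊ with hb
  have hcb : c ≤ (b:ℝ) := Nat.le_ceil c
  have hb2 : 2 ≤ b := by
    have : (2:ℝ) ≤ (b:ℝ) := le_trans hc2 hcb
    exact_mod_cast this
  have hb0 : 0 < b := by omega
  have hbub : (b:ℝ) ≤ 3 * l / Real.logb 2 x := by
    have h1 : (b:ℝ) < c + 1 := Nat.ceil_lt_add_one (by linarith)
    have h2 : c + 1 ≤ 3 * c / 2 := by linarith
    have : 3 * c / 2 = 3 * l / Real.logb 2 x := by
      rw [hc]; ring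
    linarith
  have hb0' : (0:ℝ) < (b:ℝ) := by exact_mod_cast hb0
  set m := n / b with hm
  have hmx : x ≤ (m:ℝ) := by
    have hnb : (n:ℝ) < ((m:ℝ) + 1) * b := by
      have : n < (m + 1) * b := by
        rw [hm, add_mul, one_mul]; exact Nat.lt_div_mul_add hb0
      exact_mod_cast this
    have hdiv : (n:ℝ) / b - 1 < (m:ℝ) := by
      rw [div_sub_one (ne_of_gt hb0'), div_lt_iff₀ hb0']
      nlinarith
    have hnb2 : x * Real.logb 2 x / 3 ≤ (n:ℝ) / b := by
      rw [le_div_iff₀ hb0']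
      have h1 : (b:ℝ) * (x * Real.logb 2 x / 3) ≤ (3 * l / Real.logb 2 x) * (x * Real.logb 2 x / 3) := by
        apply mul_le_mul_of_nonneg_right hbub
        positivity
      have h2 : (3 * l / Real.logb 2 x) * (x * Real.logb 2 x / 3) = l * x := by
        field_simp
      have h3 : l * x = (n:ℝ) := by
        rw [hx]; field_simp
      nlinarith
    nlinarith
  have hm1 : (1:ℝ) ≤ (m:ℝ) := by linarith
  have hm0 : 0 < (m:ℝ) := by linarith
  have hlogm : Real.logb 2 x ≤ 2 * Real.logb 2 (m:ℝ) := by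
    have h1 : Real.logb 2 x ≤ Real.logb 2 ((m:ℝ)^2) := by
      apply Real.logb_le_logb_of_le (by norm_num) hx0
      nlinarith
    rwa [show ((m:ℝ)^2) = (m:ℝ)^(2:ℕ) by norm_num, Real.logb_pow, Nat.cast_ofNat] at h1
  have key : l ≤ (b:ℝ) * Real.logb 2 (m:ℝ) := by
    have h1 : c * (Real.logb 2 x / 2) ≤ (b:ℝ) * Real.logb 2 (m:ℝ) := by
      exact mul_le_mul hcb (by linarith) (by positivity) hb0'.le
    have h2 : c * (Real.logb 2 x / 2) = l := by
      rw [hc]; field_simp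
    linarith
  have final : (L:ℝ) ≤ ((m:ℝ)) ^ b := by
    calc (L:ℝ) = 2 ^ l := (Real.rpow_logb (by norm_num) (by norm_num) (by linarith)).symm
    _ ≤ 2 ^ ((Real.logb 2 (m:ℝ)) * (b:ℝ)) := by
        apply Real.rpow_le_rpow_of_exponent_le (by norm_num)
        linarith [key]
    _ = ((2:ℝ) ^ Real.logb 2 (m:ℝ)) ^ ((b:ℝ)) := Real.rpow_mul (by norm_num) _ _
    _ = (m:ℝ) ^ ((b:ℝ)) := by rw [Real.rpow_logb (by norm_num) (by norm_num) hm0]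
    _ = (m:ℝ) ^ b := Real.rpow_natCast _ _
  exact_mod_cast final
end

section
/- For all integers n ≥ 1 and L ≥ 2 with n ≤ L ≤ 2^(n/16), the smallest positive integer b satisfying ⌊n/b⌋^b ≥ L obeys b ≤ 2·log L / log(n / log L), where logs are base 2. -/
/-!
Write `ℓ = log L` and `D = log (n / ℓ)`. The hypothesis `L ≤ 2^(n/16)` gives `n / ℓ ≥ 16`, so `D ≥ 4`,
and `n ≤ L` gives `D ≤ ℓ`. Hence `b₀ = ⌊2ℓ/D⌋` lies between `ℓ/D` and `ℓ/2`: every group then has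
`⌊n/b₀⌋ ≥ n/ℓ` cells, and `(n/ℓ)^b₀ = 2^(D b₀) ≥ 2^ℓ = L`. By minimality, `b ≤ b₀ ≤ 2ℓ/D`.
-/

open Real

theorem le_natCast_div_of_add_one_le {c : ℝ} {n b : ℕ} (h : c + 1 ≤ (n : ℝ) / b) :
    c ≤ (n / b : ℕ) := by
  have := Nat.sub_one_lt_floor ((n : ℝ) / b)
  rw [Nat.floor_div_eq_div] at this
  linarith

theorem le_pow_of_logb_le_mul_logb {a L c : ℝ} (ha : 1 < a) (hL : 0 < L) (hc : 0 < c) {b : ℕ}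
    (h : logb a L ≤ b * logb a c) : L ≤ c ^ b := by
  rwa [← logb_le_logb ha hL (pow_pos hc b), logb_pow]

theorem half_le_natFloor {B : ℝ} (hB : 1 ≤ B) : B / 2 ≤ ⌊B⌋₊ := by
  have : (1 : ℝ) ≤ ⌊B⌋₊ := by exact_mod_cast Nat.le_floor (by simpa using hB)
  linarith [Nat.sub_one_lt_floor B]

theorem floor_two_mul_div_bounds {ℓ D : ℝ} (hD : 4 ≤ D) (hDℓ : D ≤ 2 * ℓ) :
    1 ≤ ⌊2 * ℓ / D⌋₊ ∧ ℓ ≤ ⌊2 * ℓ / D⌋₊ * D ∧ 2 * (⌊2 * ℓ / D⌋₊ : ℝ) ≤ ℓ := by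
  have hDpos : 0 < D := by linarith
  have hB : 1 ≤ 2 * ℓ / D := by rwa [le_div_iff₀ hDpos, one_mul]
  refine ⟨Nat.le_floor (by simpa using hB), ?_, ?_⟩
  · have := half_le_natFloor hB
    rw [div_div, div_le_iff₀ (by positivity)] at this
    linarith
  · have := Nat.floor_le (zero_le_one.trans hB)
    rw [le_div_iff₀ hDpos] at this
    nlinarith

theorem stmt1_general (n L : ℕ) (hL : 2 ≤ L) (hnL : n ≤ L)
    (hLup : (L : ℝ) ≤ (2 : ℝ) ^ ((n : ℝ) / 16)) (b : ℕ)
    (hb : IsLeast {b' : ℕ | 0 < b' ∧ L ≤ (n / b') ^ b'} b) :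
    (b : ℝ) ≤ 2 * Real.logb 2 L / Real.logb 2 ((n : ℝ) / Real.logb 2 L) := by
  have hL0 : (0 : ℝ) < L := by positivity
  set ℓ := logb 2 (L : ℝ)
  set D := logb 2 ((n : ℝ) / ℓ)
  have hℓ : 1 ≤ ℓ := (le_logb_iff_rpow_le one_lt_two hL0).2 (by rw [rpow_one]; exact_mod_cast hL)
  have hnℓ : 16 * ℓ ≤ n := by
    linarith [(logb_le_iff_le_rpow one_lt_two hL0).2 hLup]
  have hc : 16 ≤ (n : ℝ) / ℓ := by rwa [le_div_iff₀ (by linarith)]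
  have hD : 4 ≤ D := (le_logb_iff_rpow_le one_lt_two (by linarith)).2 (by rwa [show (2 : ℝ) ^ (4 : ℝ) = 16 by norm_num])
  have hDℓ : D ≤ ℓ := calc
    D ≤ logb 2 (n : ℝ) := logb_le_logb_of_le one_lt_two (by linarith) (div_le_self (by linarith) hℓ)
    _ ≤ ℓ := logb_le_logb_of_le one_lt_two (by linarith) (by exact_mod_cast hnL)
  set b₀ := ⌊2 * ℓ / D⌋₊
  obtain ⟨hb₁, hℓb, hbℓ⟩ : 1 ≤ b₀ ∧ ℓ ≤ b₀ * D ∧ 2 * (b₀ : ℝ) ≤ ℓ :=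
    floor_two_mul_div_bounds hD (by linarith)
  have hsize : (n : ℝ) / ℓ + 1 ≤ (n : ℝ) / b₀ := calc
    (n : ℝ) / ℓ + 1 ≤ 2 * ((n : ℝ) / ℓ) := by linarith
    _ = n / (ℓ / 2) := by ring
    _ ≤ n / b₀ := div_le_div_of_nonneg_left (by positivity) (by positivity) (by linarith)
  have hmem : L ≤ (n / b₀) ^ b₀ := by
    have := (le_pow_of_logb_le_mul_logb one_lt_two hL0 (by linarith) hℓb).trans
      (pow_le_pow_left₀ (by linarith) (le_natCast_div_of_add_one_le hsize) b₀)
    exact_mod_cast this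
  exact (Nat.cast_le.2 (hb.2 ⟨hb₁, hmem⟩)).trans (Nat.floor_le (by positivity))

/-- Claim 1: for `1 ≤ n ≤ L ≤ 2^(n/16)`, `L ≥ 2`, the smallest positive integer `b`
with `⌊n/b⌋^b ≥ L` satisfies `b ≤ 2 log L / log(n / log L)` (logs base 2). -/
theorem stmt1 (n L : ℕ) (hn : 1 ≤ n) (hL : 2 ≤ L) (hnL : n ≤ L)
    (hLup : (L : ℝ) ≤ (2 : ℝ) ^ ((n : ℝ) / 16)) (b : ℕ)
    (hb : IsLeast {b' : ℕ | 0 < b' ∧ L ≤ (n / b') ^ b'} b) :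
    (b : ℝ) ≤ 2 * Real.logb 2 L / Real.logb 2 ((n : ℝ) / Real.logb 2 L) :=
  stmt1_general n L hL hnL hLup b hb
end

section
/- Let n, L be integers with 1 ≤ n < L - 1 and L ≤ 2^(n/16). Let r be the largest integer such that C(r + n - 1, r) < L - 1. Then there is an absolute constant c > 0 such that r ≥ c · log L / log(n / log L), where logs are base 2. -/
/-!
Write `T = log L`, `D = log (n / T) ≥ 4` and `s = r + 1`. Maximality of `r` gives
`L - 1 ≤ C(r + n, s) ≤ (e (r + n) / s) ^ s`, hence `T ≤ 2 log (L - 1) ≤ 2 s log (6n / s)`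
once `r ≤ n`. Since `x ↦ x log (a / x)` is increasing on `(0, a / e]`, a small `r` would give
`T ≤ 2 y log (6n / y)` at `y = T / (32 D)`; but `log (6n / y) = log (192 (n / T) D) ≤ 5 D`,
so the right-hand side is only `5T / 16`.
-/

open Real

theorem Nat.choose_le_exp_mul_div_pow (m k : ℕ) : (m.choose k : ℝ) ≤ (exp 1 * m / k) ^ k := by
  rcases k.eq_zero_or_pos with rfl | hk
  · simp
  have hfact : (k : ℝ) ^ k ≤ exp 1 ^ k * k.factorial := by
    have := pow_div_factorial_le_exp (k : ℝ) k.cast_nonneg k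
    rwa [div_le_iff₀ (by positivity), ← exp_one_pow] at this
  calc (m.choose k : ℝ) ≤ m ^ k / k.factorial := Nat.choose_le_pow_div k m
    _ ≤ (exp 1 * m / k) ^ k := by
      rw [div_pow, mul_pow, div_le_div_iff₀ (by positivity) (by positivity)]
      calc (m : ℝ) ^ k * k ^ k ≤ m ^ k * (exp 1 ^ k * k.factorial) := by gcongr
        _ = exp 1 ^ k * m ^ k * k.factorial := by ring

theorem Nat.le_choose_succ_of_isGreatest {n m r : ℕ}
    (h : IsGreatest {r' | (r' + n - 1).choose r' < m} r) : m ≤ (r + n).choose (r + 1) := by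
  by_contra! hlt
  have := h.2 (show r + 1 ∈ {r' | (r' + n - 1).choose r' < m} by
    simpa [show r + 1 + n - 1 = r + n by omega] using hlt)
  omega

theorem Real.mul_log_div_le_mul_log_div {a x y : ℝ} (hx : 0 < x) (hxy : x ≤ y)
    (hya : exp 1 * y ≤ a) : x * log (a / x) ≤ y * log (a / y) := by
  have hy : 0 < y := hx.trans_le hxy
  have ha : 0 < a := lt_of_lt_of_le (by positivity) hya
  have hlog_ge : 1 ≤ log (a / y) := by
    rw [le_log_iff_exp_le (by positivity), le_div_iff₀ hy]
    exact hya
  have hsplit : log (a / x) = log (a / y) + log (y / x) := by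
    rw [← log_mul (by positivity) (by positivity)]
    congr 1
    field_simp
  have hgap : x * log (y / x) ≤ y - x :=
    calc x * log (y / x) ≤ x * (y / x - 1) := by
          gcongr; exact log_le_sub_one_of_pos (by positivity)
      _ = y - x := by field_simp
  rw [hsplit]
  nlinarith

theorem Real.logb_le_two_mul_logb_sub_one {b x : ℝ} (hb : 1 < b) (hx : 3 ≤ x) :
    logb b x ≤ 2 * logb b (x - 1) :=
  calc logb b x ≤ logb b ((x - 1) ^ 2) := logb_le_logb_of_le hb (by linarith) (by nlinarith)
    _ = 2 * logb b (x - 1) := by rw [logb_pow]; norm_num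

theorem Real.four_le_logb_two {u : ℝ} (hu : 16 ≤ u) : 4 ≤ logb 2 u :=
  (le_logb_iff_rpow_le one_lt_two (by linarith)).2 (by norm_num; exact hu)

theorem Real.logb_two_mul_mul_logb_le {u : ℝ} (hu : 16 ≤ u) :
    logb 2 (192 * u * logb 2 u) ≤ 5 * logb 2 u := by
  have hD := four_le_logb_two hu
  have h192 : logb 2 192 ≤ 8 :=
    (logb_le_iff_le_rpow one_lt_two (by norm_num)).2 (by norm_num)
  have hloglog : logb 2 (logb 2 u) ≤ 2 * (logb 2 u - 1) := by
    have := log_le_sub_one_of_pos (x := logb 2 u) (by linarith)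
    have := log_two_gt_d9
    rw [logb, div_le_iff₀ (log_pos one_lt_two)]
    nlinarith
  rw [logb_mul (by positivity) (by linarith), logb_mul (by norm_num) (by linarith)]
  linarith

theorem Real.div_logb_le_of_le_mul_logb {T n r : ℝ} (hT : 0 < T) (hTn : 16 * T ≤ n)
    (hr : 1 ≤ r) (h : T ≤ 2 * ((r + 1) * logb 2 (exp 1 * (r + n) / (r + 1)))) :
    1 / 64 * T / logb 2 (n / T) ≤ r := by
  have hnT : 16 ≤ n / T := by rw [le_div_iff₀ hT]; linarith
  set D := logb 2 (n / T)
  have hD : 4 ≤ D := four_le_logb_two hnT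
  by_contra! hlt
  set y := T / (32 * D) with hy
  have hry : r + 1 ≤ y := by
    have : 1 / 64 * T / D * 2 = y := by rw [hy]; field_simp; ring
    linarith
  have hyT : y ≤ T := by
    rw [div_le_iff₀ (by positivity)]; nlinarith
  have he3 : exp 1 < 3 := by linarith [exp_one_lt_d9]
  have hyn : exp 1 * y ≤ 6 * n := by nlinarith [exp_pos 1]
  have hrn : exp 1 * (r + n) ≤ 6 * n := by nlinarith [exp_pos 1]
  have hmono : (r + 1) * logb 2 (6 * n / (r + 1)) ≤ y * logb 2 (6 * n / y) := by
    simpa only [logb, mul_div_assoc] using div_le_div_of_nonneg_right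
      (mul_log_div_le_mul_log_div (by linarith) hry hyn) (log_pos one_lt_two).le
  have hsmall : y * logb 2 (6 * n / y) ≤ 5 * T / 32 := by
    have hsplit : 6 * n / y = 192 * (n / T) * D := by rw [hy]; field_simp; ring
    have hyD : y * D = T / 32 := by rw [hy]; field_simp
    rw [hsplit]
    nlinarith [logb_two_mul_mul_logb_le hnT]
  have : T ≤ 2 * (5 * T / 32) :=
    calc T ≤ 2 * ((r + 1) * logb 2 (exp 1 * (r + n) / (r + 1))) := h
      _ ≤ 2 * ((r + 1) * logb 2 (6 * n / (r + 1))) := by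
          gcongr 2 * ((r + 1) * ?_)
          exact logb_le_logb_of_le one_lt_two (div_pos (mul_pos (exp_pos 1) (by linarith))
            (by linarith)) (div_le_div_of_nonneg_right hrn (by linarith))
      _ ≤ 2 * (5 * T / 32) := by linarith
  linarith

theorem Nat.logb_two_le_of_isGreatest_choose_lt {n L r : ℕ} (hn : 1 ≤ n) (hnL : n < L - 1)
    (hr : IsGreatest {r' : ℕ | (r' + n - 1).choose r' < L - 1} r) :
    logb 2 L ≤ 2 * ((r + 1) * logb 2 (exp 1 * (r + n) / (r + 1))) := by
  have hL3 : (3 : ℝ) ≤ L := by exact_mod_cast (by omega : 3 ≤ L)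
  have hchoose : (L : ℝ) - 1 ≤ (r + n).choose (r + 1) := by
    rw [← Nat.cast_one, ← Nat.cast_sub (by omega)]
    exact_mod_cast le_choose_succ_of_isGreatest hr
  calc logb 2 L ≤ 2 * logb 2 (L - 1) := logb_le_two_mul_logb_sub_one one_lt_two hL3
    _ ≤ 2 * logb 2 ((exp 1 * (r + n : ℕ) / (r + 1 : ℕ)) ^ (r + 1)) := by
        gcongr 2 * ?_
        exact logb_le_logb_of_le one_lt_two (by linarith)
          (hchoose.trans (choose_le_exp_mul_div_pow _ _))
    _ = 2 * ((r + 1) * logb 2 (exp 1 * (r + n) / (r + 1))) := by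
        rw [logb_pow]; push_cast; ring

/-- Claim 2: for `1 ≤ n < L - 1` and `L ≤ 2^(n/16)`, the largest integer `r` with
`C(r+n-1, r) < L - 1` satisfies `r ≥ c · log L / log(n / log L)` for an absolute
constant `c > 0` (logs base 2). -/
theorem stmt3 : ∃ c : ℝ, 0 < c ∧ ∀ n L r : ℕ, 1 ≤ n → n < L - 1 →
    (L : ℝ) ≤ (2 : ℝ) ^ ((n : ℝ) / 16) →
    IsGreatest {r' : ℕ | (r' + n - 1).choose r' < L - 1} r →
    c * Real.logb 2 L / Real.logb 2 ((n : ℝ) / Real.logb 2 L) ≤ (r : ℝ) := by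
  refine ⟨1 / 64, by norm_num, fun n L r hn hnL hL hr => ?_⟩
  have hr1 : 1 ≤ r := hr.2 (show 1 ∈ {r' : ℕ | (r' + n - 1).choose r' < L - 1} by
    simp only [Set.mem_ofPred_eq, Nat.add_sub_cancel_left, Nat.choose_one_right]; omega)
  have hL2 : (2 : ℝ) < L := by exact_mod_cast (by omega : 2 < L)
  have hTn : 16 * logb 2 L ≤ n := by
    have := (logb_le_iff_le_rpow one_lt_two (by linarith)).2 hL
    linarith
  exact div_logb_le_of_le_mul_logb (logb_pos one_lt_two (by linarith)) hTn
    (by exact_mod_cast hr1) (Nat.logb_two_le_of_isGreatest_choose_lt hn hnL hr)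
end

section
/- Let L ≤ 2^(n/16) and suppose c^n = L ≤ q^n with c ≥ 2^(1/16). Any rewriting code storing L values in n cells of q levels guarantees at most O(q/c) rewrites; specifically, if each rewrite must be able to reach any of L-1 ≥ c^n - 1 new values, then the worst-case number of unit level increments per rewrite is r = Ω(n·c), so the number of guaranteed rewrites is at most n(q-1)/(r+1) = O(q/c). -/
/-!
From any state, at most `(n + r).choose r` states are reachable by at most `r` unit increments,
so when `(n + r).choose r < L` some admissible new value costs at least `r + 1` increments. An
adversary who always requests the most expensive value raises the total level by `r + 1` per
rewrite, while the total level never exceeds `n * (q - 1)`; hence `t * (r + 1) ≤ n * (q - 1)`.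
For `L ≥ 2 ^ (n / 16)` the choice `r = n / 512` is admissible, which gives `t ≤ 512 * q`.
-/

/-- `Supports n q L dec upd t` means: the rewriting code with decoding map `dec` and
(deterministic) update strategy `upd`, on `n` cells of `q` levels and data alphabet
`Fin L` (complete data graph), guarantees `t` rewrites starting from the all-zero
state: for every rewrite sequence `v` the induced chain of states only raises cell
levels, keeps all levels `≤ q-1`, and decodes to the requested values. -/
def Supports (n q L : ℕ) (dec : (Fin n → ℕ) → Fin L)
    (upd : (Fin n → ℕ) → Fin L → (Fin n → ℕ)) (t : ℕ) : Prop :=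
  ∀ v : ℕ → Fin L, v 0 ≠ dec (fun _ => 0) → (∀ i, v (i + 1) ≠ v i) →
  ∀ s : ℕ → Fin n → ℕ, s 0 = (fun _ => 0) → (∀ i, s (i + 1) = upd (s i) (v i)) →
  ∀ i < t, (∀ j, s i j ≤ s (i + 1) j) ∧ (∀ j, s (i + 1) j ≤ q - 1) ∧ dec (s (i + 1)) = v i

open Finset Function Nat

def sumLeEquivSumEq (n r : ℕ) :
    {d : Fin n → ℕ // ∑ i, d i ≤ r} ≃ {P : Fin (n + 1) → ℕ // ∑ i, P i = r} where
  toFun d := ⟨Fin.cons (r - ∑ i, d.1 i) d.1, by simp [Fin.sum_cons, d.2]⟩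
  invFun P := ⟨Fin.tail P.1, by
    have := P.2
    rw [Fin.sum_univ_succ] at this
    simp only [Fin.tail]
    omega⟩
  left_inv d := by simp
  right_inv P := by
    ext1
    have := P.2
    rw [Fin.sum_univ_succ] at this
    simp only [Fin.tail]
    rw [show r - ∑ i : Fin n, P.1 i.succ = P.1 0 by omega]
    exact Fin.cons_self_tail P.1

theorem natCard_sum_le (n r : ℕ) :
    Nat.card {d : Fin n → ℕ // ∑ i, d i ≤ r} = (n + r).choose r := by
  rw [Nat.card_congr ((sumLeEquivSumEq n r).trans (Sym.equivNatSumOfFintype (Fin (n + 1)) r).symm),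
    Nat.card_eq_fintype_card, Sym.card_sym_eq_choose, Fintype.card_fin, Nat.add_right_comm,
    Nat.add_sub_cancel]

instance (n r : ℕ) : Finite {d : Fin n → ℕ // ∑ i, d i ≤ r} :=
  .of_equiv _ ((sumLeEquivSumEq n r).trans (Sym.equivNatSumOfFintype (Fin (n + 1)) r).symm).symm

theorem card_le_choose_of_sum_sub_le {α : Type*} [Fintype α] {n r : ℕ} {x : Fin n → ℕ}
    {f : α → Fin n → ℕ} (hf : Injective f) (hx : ∀ a, x ≤ f a)
    (hr : ∀ a, ∑ i, (f a i - x i) ≤ r) : Fintype.card α ≤ (n + r).choose r := by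
  rw [← natCard_sum_le, ← Nat.card_eq_fintype_card]
  refine Nat.card_le_card_of_injective (fun a => ⟨f a - x, hr a⟩) fun a b hab => hf ?_
  simpa [tsub_add_cancel_of_le (hx _)] using congrArg (fun d => d.1 + x) hab

open Real in
theorem choose_add_le_exp_mul_pow {n r m : ℕ} (h : n + r ≤ m * r) :
    ((n + r).choose r : ℝ) ≤ (exp 1 * m) ^ r := by
  have hr : (r : ℝ) ^ r / r ! ≤ exp 1 ^ r := by
    rw [← exp_nat_mul, mul_one]; exact pow_div_factorial_le_exp _ (Nat.cast_nonneg r) r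
  calc ((n + r).choose r : ℝ) ≤ ((n + r : ℕ) : ℝ) ^ r / r ! := Nat.choose_le_pow_div r _
    _ ≤ ((m * r : ℕ) : ℝ) ^ r / r ! := by gcongr
    _ = m ^ r * ((r : ℝ) ^ r / r !) := by push_cast; ring
    _ ≤ m ^ r * exp 1 ^ r := by gcongr
    _ = (exp 1 * m) ^ r := by ring

theorem choose_add_div_lt_two_rpow {n : ℕ} (hn : 0 < n) :
    ((n + n / 512).choose (n / 512) : ℝ) < 2 ^ ((n : ℝ) / 16) := by
  set r := n / 512
  rcases Nat.eq_zero_or_pos r with hr0 | hr0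
  · rw [hr0, Nat.choose_zero_right, Nat.cast_one]
    exact Real.one_lt_rpow one_lt_two (by positivity)
  have hr512 : 512 * r ≤ n := Nat.mul_div_le n 512
  have hnr : n + r ≤ 1025 * r := by omega
  have he : Real.exp 1 * (1025 : ℕ) ≤ 2 ^ 12 := by
    have := Real.exp_one_lt_d9; push_cast; nlinarith
  calc ((n + r).choose r : ℝ) ≤ (Real.exp 1 * (1025 : ℕ)) ^ r := choose_add_le_exp_mul_pow hnr
    _ ≤ (2 ^ 12) ^ r := by gcongr
    _ = 2 ^ ((12 * r : ℕ) : ℝ) := by rw [Real.rpow_natCast, pow_mul]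
    _ < 2 ^ ((n : ℝ) / 16) := by
        refine Real.rpow_lt_rpow_of_exponent_lt one_lt_two ?_
        have : ((512 * r : ℕ) : ℝ) ≤ n := by exact_mod_cast hr512
        have : (0 : ℝ) < n := by exact_mod_cast hn
        push_cast at *; linarith

variable {n q L : ℕ} {dec : (Fin n → ℕ) → Fin L} {upd : (Fin n → ℕ) → Fin L → Fin n → ℕ}
  {t : ℕ}

def states (upd : (Fin n → ℕ) → Fin L → Fin n → ℕ) (v : ℕ → Fin L) : ℕ → Fin n → ℕ
  | 0 => 0
  | i + 1 => upd (states upd v i) (v i)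

theorem states_congr {v w : ℕ → Fin L} {i : ℕ} (h : ∀ j < i, v j = w j) :
    states upd v i = states upd w i := by
  induction i with
  | zero => rfl
  | succ i ih => simp only [states, ih fun j hj => h j (by omega), h i (by omega)]

theorem states_update_self (v : ℕ → Fin L) (i : ℕ) (a : Fin L) :
    states upd (update v i a) i = states upd v i :=
  states_congr fun _ hj => update_of_ne hj.ne _ _

theorem states_update_succ (v : ℕ → Fin L) (i : ℕ) (a : Fin L) :
    states upd (update v i a) (i + 1) = upd (states upd v i) a := by
  rw [states, states_update_self, update_self]

-- Requests are compared with the stored value rather than with the previous request; for a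
-- correct code the two agree (`Supports.spec`).
def IsRewrite (dec : (Fin n → ℕ) → Fin L) (upd : (Fin n → ℕ) → Fin L → Fin n → ℕ)
    (v : ℕ → Fin L) (i : ℕ) : Prop :=
  ∀ j < i, v j ≠ dec (states upd v j)

theorem IsRewrite.update {v : ℕ → Fin L} {i : ℕ} (hv : IsRewrite dec upd v i) {a : Fin L}
    (ha : a ≠ dec (states upd v i)) : IsRewrite dec upd (update v i a) (i + 1) := by
  intro j hj
  rcases Nat.lt_succ_iff_lt_or_eq.mp hj with hj | rfl
  · rw [update_of_ne hj.ne, states_congr (w := v) fun k hk => update_of_ne (by omega) _ _]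
    exact hv j hj
  · rwa [update_self, states_update_self]

theorem Supports.spec_of_ne_prev [Nontrivial (Fin L)] (h : Supports n q L dec upd t)
    {v : ℕ → Fin L} {i : ℕ} (hi : i < t) (hv0 : v 0 ≠ dec 0) (hv : ∀ j < i, v (j + 1) ≠ v j) :
    states upd v i ≤ states upd v (i + 1) ∧ (∀ k, states upd v (i + 1) k ≤ q - 1) ∧
      dec (states upd v (i + 1)) = v i := by
  obtain ⟨b, hb⟩ := exists_ne (v i)
  -- alternating between `v i` and `b` after step `i` extends the prefix to a legal rewrite sequence
  set w : ℕ → Fin L := fun j => if j < i then v j else if (j - i) % 2 = 0 then v i else b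
  have hw : ∀ j ≤ i, w j = v j := by
    intro j hj
    rcases hj.lt_or_eq with hj | rfl
    · simp [w, hj]
    · simp [w]
  have hws : ∀ j ≤ i + 1, states upd w j = states upd v j :=
    fun j hj => states_congr fun k hk => hw k (by omega)
  have hw_ne : ∀ j, w (j + 1) ≠ w j := by
    intro j
    rcases le_or_gt (j + 1) i with hj | hj
    · rw [hw _ hj, hw _ (by omega)]; exact hv j hj
    · have : (j + 1 - i) % 2 ≠ (j - i) % 2 := by omega
      simp only [w, show ¬ j + 1 < i by omega, show ¬ j < i by omega, if_false]
      split_ifs <;> omega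
  have := h w (by rwa [hw 0 (Nat.zero_le _)]) hw_ne (states upd w) rfl (fun _ => rfl) i hi
  rwa [hws i i.le_succ, hws (i + 1) le_rfl, hw i le_rfl] at this

theorem Supports.spec [Nontrivial (Fin L)] (h : Supports n q L dec upd t) {v : ℕ → Fin L}
    {i : ℕ} (hi : i < t) (hv : IsRewrite dec upd v (i + 1)) :
    states upd v i ≤ states upd v (i + 1) ∧ (∀ k, states upd v (i + 1) k ≤ q - 1) ∧
      dec (states upd v (i + 1)) = v i := by
  induction i using Nat.strong_induction_on with
  | _ i ih =>
    refine h.spec_of_ne_prev hi (hv 0 i.succ_pos) fun j hj => ?_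
    rw [← (ih j hj (by omega) fun k hk => hv k (by omega)).2.2]
    exact hv (j + 1) (by omega)

theorem Supports.exists_lt_sum_sub [Nontrivial (Fin L)] (h : Supports n q L dec upd t) {r : ℕ}
    (hL : (n + r).choose r < L) {v : ℕ → Fin L} {i : ℕ} (hi : i < t)
    (hv : IsRewrite dec upd v i) :
    ∃ a ≠ dec (states upd v i), r < ∑ k, (upd (states upd v i) a k - states upd v i k) := by
  set x := states upd v i
  by_contra! hcheap
  have hgood : ∀ a ≠ dec x, x ≤ upd x a ∧ dec (upd x a) = a := by
    intro a ha
    have := h.spec hi (hv.update ha)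
    rw [states_update_self, states_update_succ, update_self] at this
    exact ⟨this.1, this.2.2⟩
  classical
  let f : Fin L → Fin n → ℕ := fun a => if a = dec x then x else upd x a
  have hdec : LeftInverse dec f := by
    intro a
    by_cases ha : a = dec x
    · simp [f, ha]
    · simp [f, ha, (hgood a ha).2]
  have := card_le_choose_of_sum_sub_le (r := r) hdec.injective (x := x)
    (fun a => by by_cases ha : a = dec x <;> simp [f, ha, (hgood a _).1])
    (fun a => by by_cases ha : a = dec x <;> simp [f, ha, hcheap a])
  rw [Fintype.card_fin] at this
  omega

theorem Supports.exists_isRewrite_mul_le_sum [Nontrivial (Fin L)] (h : Supports n q L dec upd t)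
    {r : ℕ} (hL : (n + r).choose r < L) :
    ∀ k ≤ t, ∃ v, IsRewrite dec upd v k ∧ k * (r + 1) ≤ ∑ i, states upd v k i := by
  intro k hk
  induction k with
  | zero => exact ⟨fun _ => dec 0, fun _ hj => absurd hj (Nat.not_lt_zero _), by simp⟩
  | succ k ih =>
    obtain ⟨v, hv, hsum⟩ := ih (by omega)
    obtain ⟨a, ha, hcost⟩ := h.exists_lt_sum_sub hL (by omega : k < t) hv
    have hmono := (h.spec (by omega : k < t) (hv.update ha)).1
    rw [states_update_self, states_update_succ] at hmono
    refine ⟨update v k a, hv.update ha, ?_⟩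
    rw [states_update_succ]
    set x := states upd v k
    have : ∑ i, upd x a i = ∑ i, x i + ∑ i, (upd x a i - x i) := by
      rw [← sum_add_distrib]
      exact sum_congr rfl fun i _ => (add_tsub_cancel_of_le (hmono i)).symm
    rw [this, add_mul, one_mul]
    omega

theorem Supports.mul_succ_le (h : Supports n q L dec upd t) {r : ℕ}
    (hL : (n + r).choose r < L) : t * (r + 1) ≤ n * (q - 1) := by
  have : Nontrivial (Fin L) :=
    Fin.nontrivial_iff_two_le.mpr (by have := Nat.choose_pos (Nat.le_add_left r n); omega)
  rcases Nat.eq_zero_or_pos t with rfl | ht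
  · simp
  obtain ⟨v, hv, hsum⟩ := h.exists_isRewrite_mul_le_sum hL t le_rfl
  have hbound := (h.spec (by omega : t - 1 < t) (by rwa [Nat.sub_add_cancel ht])).2.1
  rw [Nat.sub_add_cancel ht] at hbound
  calc t * (r + 1) ≤ ∑ i, states upd v t i := hsum
    _ ≤ ∑ _i : Fin n, (q - 1) := sum_le_sum fun i _ => hbound i
    _ = n * (q - 1) := by simp

theorem two_rpow_div_eq_pow (n : ℕ) : (2 : ℝ) ^ ((n : ℝ) / 16) = (2 ^ ((1 : ℝ) / 16)) ^ n := by
  rw [← Real.rpow_natCast, ← Real.rpow_mul zero_le_two, one_div_mul_eq_div]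

/-- Theorem (upper bound for very large alphabets): for `L ≤ 2^(n/16)`,
`c^n = L ≤ q^n` with `c ≥ 2^(1/16)`, any rewriting code storing `L` values in `n`
cells of `q` levels guarantees at most `O(q/c)` rewrites. -/
theorem stmt11 : ∃ K : ℝ, 0 < K ∧ ∀ n q L : ℕ, ∀ c : ℝ, 1 ≤ n →
    (L : ℝ) ≤ (2 : ℝ) ^ ((n : ℝ) / 16) →
    (2 : ℝ) ^ ((1 : ℝ) / 16) ≤ c → (L : ℝ) = c ^ n → (L : ℝ) ≤ (q : ℝ) ^ n →
    ∀ dec upd t, Supports n q L dec upd t → (t : ℝ) ≤ K * (q : ℝ) / c := by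
  refine ⟨1024, by norm_num, fun n q L c hn hL16 hc hLc _ dec upd t h => ?_⟩
  have h2pos : (0 : ℝ) < 2 ^ ((1 : ℝ) / 16) := by positivity
  have hLlow : (2 : ℝ) ^ ((n : ℝ) / 16) ≤ L := by
    rw [two_rpow_div_eq_pow, hLc]; gcongr
  have hc2 : c ≤ 2 := by
    have : c ^ n ≤ (2 ^ ((1 : ℝ) / 16)) ^ n := by rw [← hLc, ← two_rpow_div_eq_pow]; exact hL16
    calc c ≤ 2 ^ ((1 : ℝ) / 16) := le_of_pow_le_pow_left₀ (by omega) h2pos.le this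
      _ ≤ 2 ^ (1 : ℝ) := Real.rpow_le_rpow_of_exponent_le one_le_two (by norm_num)
      _ = 2 := Real.rpow_one 2
  have hB : (n + n / 512).choose (n / 512) < L := by
    exact_mod_cast (choose_add_div_lt_two_rpow hn).trans_le hLlow
  have ht : t ≤ 512 * q := by
    refine Nat.le_of_mul_le_mul_right (c := n / 512 + 1) ?_ (Nat.succ_pos _)
    calc t * (n / 512 + 1) ≤ n * (q - 1) := h.mul_succ_le hB
      _ ≤ (512 * (n / 512 + 1)) * q := Nat.mul_le_mul (by omega) (Nat.sub_le q 1)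
      _ = 512 * q * (n / 512 + 1) := by ring
  calc (t : ℝ) ≤ 512 * q := by exact_mod_cast ht
    _ = 1024 * q / 2 := by ring
    _ ≤ 1024 * q / c := by gcongr; exact h2pos.trans_le hc
end

section
/- If C(n + r - 1, r) ≥ c^n for integers n ≥ 1, r ≥ 1 and real c ≥ 2^(1/16), then r ≥ c'·n·c for some absolute constant c' > 0. -/
open Real

/-- `k^k ≤ 3^k · k!` over the reals. -/
private lemma pow_self_le_three_pow_mul_factorial (k : ℕ) :
    (k : ℝ) ^ k ≤ 3 ^ k * (Nat.factorial k : ℝ) := by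
  induction k with
  | zero => norm_num
  | succ k ih =>
    have hstep : ((k : ℝ) + 1) ^ k ≤ 3 * (k : ℝ) ^ k := by
      rcases Nat.eq_zero_or_pos k with hk | hk
      · subst hk; norm_num
      · have hkpos : (0 : ℝ) < k := by exact_mod_cast hk
        have h1 : (k : ℝ) + 1 ≤ (k : ℝ) * Real.exp (1 / k) := by
          have := Real.add_one_le_exp (1 / (k : ℝ))
          have h2 : (k : ℝ) * (1 / k + 1) ≤ (k : ℝ) * Real.exp (1 / k) :=
            mul_le_mul_of_nonneg_left this (le_of_lt hkpos)
          have h3 : (k : ℝ) * (1 / k + 1) = (k : ℝ) + 1 := by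
            field_simp; ring
          linarith
        calc ((k : ℝ) + 1) ^ k ≤ ((k : ℝ) * Real.exp (1 / k)) ^ k :=
              pow_le_pow_left₀ (by positivity) h1 k
          _ = (k : ℝ) ^ k * Real.exp (1 / k) ^ k := mul_pow _ _ _
          _ = (k : ℝ) ^ k * Real.exp (k * (1 / k)) := by rw [Real.exp_nat_mul]
          _ = (k : ℝ) ^ k * Real.exp 1 := by
              rw [mul_one_div, div_self (ne_of_gt hkpos)]
          _ ≤ (k : ℝ) ^ k * 3 := by
              have := Real.exp_one_lt_d9
              have hx : (0 : ℝ) ≤ (k : ℝ) ^ k := by positivity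
              nlinarith
          _ = 3 * (k : ℝ) ^ k := mul_comm _ _
    have hfac : (Nat.factorial (k + 1) : ℝ) = ((k : ℝ) + 1) * (Nat.factorial k : ℝ) := by
      rw [Nat.factorial_succ]; push_cast; ring
    have hkk : (0 : ℝ) ≤ (k : ℝ) + 1 := by positivity
    calc ((k + 1 : ℕ) : ℝ) ^ (k + 1) = ((k : ℝ) + 1) * ((k : ℝ) + 1) ^ k := by
          push_cast; ring
      _ ≤ ((k : ℝ) + 1) * (3 * (k : ℝ) ^ k) := by
          exact mul_le_mul_of_nonneg_left hstep hkk
      _ ≤ ((k : ℝ) + 1) * (3 * (3 ^ k * (Nat.factorial k : ℝ))) := by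
          have : 3 * (k : ℝ) ^ k ≤ 3 * (3 ^ k * (Nat.factorial k : ℝ)) := by linarith
          exact mul_le_mul_of_nonneg_left this hkk
      _ = 3 ^ (k + 1) * (Nat.factorial (k + 1) : ℝ) := by
          rw [hfac]; ring

/-- `C(m,k) · k^k ≤ (3m)^k` over the reals. -/
private lemma choose_mul_le (m k : ℕ) :
    (m.choose k : ℝ) * (k : ℝ) ^ k ≤ (3 * (m : ℝ)) ^ k := by
  have h1 : (m.choose k : ℝ) ≤ (m ^ k : ℝ) / (Nat.factorial k : ℝ) := by
    exact_mod_cast Nat.choose_le_pow_div k m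
  have hfac : (0 : ℝ) < (Nat.factorial k : ℝ) := by exact_mod_cast k.factorial_pos
  have h2 : (m.choose k : ℝ) * (Nat.factorial k : ℝ) ≤ (m : ℝ) ^ k := by
    rw [← le_div_iff₀ hfac]; push_cast at h1 ⊢; exact h1
  have h3 := pow_self_le_three_pow_mul_factorial k
  have hc : (0 : ℝ) ≤ (m.choose k : ℝ) := by positivity
  calc (m.choose k : ℝ) * (k : ℝ) ^ k
      ≤ (m.choose k : ℝ) * (3 ^ k * (Nat.factorial k : ℝ)) :=
        mul_le_mul_of_nonneg_left h3 hc
    _ = 3 ^ k * ((m.choose k : ℝ) * (Nat.factorial k : ℝ)) := by ring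
    _ ≤ 3 ^ k * (m : ℝ) ^ k := by
        exact mul_le_mul_of_nonneg_left h2 (by positivity)
    _ = (3 * (m : ℝ)) ^ k := by rw [mul_pow]

set_option maxHeartbeats 1000000 in
/-- Counting lemma: if `C(n+r-1, r) ≥ c^n` for integers `n, r ≥ 1` and real
`c ≥ 2^(1/16)`, then `r ≥ c'·n·c` for some absolute constant `c' > 0`. -/
theorem stmt12 : ∃ c' : ℝ, 0 < c' ∧ ∀ n r : ℕ, ∀ c : ℝ, 1 ≤ n → 1 ≤ r →
    (2 : ℝ) ^ ((1 : ℝ) / 16) ≤ c → c ^ n ≤ ((n + r - 1).choose r : ℝ) →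
    c' * (n : ℝ) * c ≤ (r : ℝ) := by
  refine ⟨1 / 2000, by norm_num, ?_⟩
  intro n r c hn hr hc hcnt
  -- basic facts
  have hc1 : (1 : ℝ) < c := by
    have h1 : (2 : ℝ) ^ (0 : ℝ) < (2 : ℝ) ^ ((1 : ℝ) / 16) :=
      (Real.rpow_lt_rpow_left_iff (by norm_num)).mpr (by norm_num)
    rw [Real.rpow_zero] at h1
    linarith
  have hlogc : (1 / 16 : ℝ) * Real.log 2 ≤ Real.log c := by
    have := Real.log_le_log (by positivity) hc
    rwa [Real.log_rpow (by norm_num)] at this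
  -- n = 1 is impossible
  rcases Nat.lt_or_ge n 2 with hn2 | hn2
  · interval_cases n
    · exfalso
      have : (1 + r - 1).choose r = 1 := by
        have : 1 + r - 1 = r := by omega
        rw [this, Nat.choose_self]
      rw [this] at hcnt
      simp only [pow_one, Nat.cast_one] at hcnt
      linarith
  -- now n ≥ 2
  have hnR : (2 : ℝ) ≤ (n : ℝ) := by exact_mod_cast hn2
  have hrR : (1 : ℝ) ≤ (r : ℝ) := by exact_mod_cast hr
  set m : ℕ := n + r - 1 with hm
  have hmc : (m : ℝ) = (n : ℝ) + (r : ℝ) - 1 := by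
    have : (m : ℕ) + 1 = n + r := by omega
    have := congrArg (fun x : ℕ => (x : ℝ)) this
    push_cast at this
    linarith
  by_contra hcon
  push_neg at hcon
  have hrs : (r : ℝ) < (n : ℝ) * c / 2000 := by
    linarith [hcon]
  rcases le_or_gt c 10 with hc10 | hc10
  · -- small c case : r < n/200, use C ≤ (3m/r)^r and logs
    have hr200 : (r : ℝ) < (n : ℝ) / 200 := by
      have hn0 : (0 : ℝ) < n := by linarith
      nlinarith
    have hm2n : (m : ℝ) ≤ 2 * (n : ℝ) := by
      rw [hmc]; linarith
    have hCb : ((m.choose r : ℝ)) * (r : ℝ) ^ r ≤ (6 * (n : ℝ)) ^ r := by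
      calc ((m.choose r : ℝ)) * (r : ℝ) ^ r ≤ (3 * (m : ℝ)) ^ r := choose_mul_le m r
        _ ≤ (6 * (n : ℝ)) ^ r := by
            apply pow_le_pow_left₀ (by positivity)
            linarith
    -- log estimate: (6n)^r < c^n * r^r
    have hr0 : (0 : ℝ) < r := by linarith
    have hn0 : (0 : ℝ) < n := by linarith
    have ht0 : (0 : ℝ) < 6 * (n : ℝ) / r := by positivity
    have hlogt : Real.log (6 * (n : ℝ) / r) ≤ (6 * (n : ℝ) / r) / 1200 - 1 + Real.log 1200 := by
      have h := Real.log_le_sub_one_of_pos (show (0:ℝ) < (6 * (n : ℝ) / r) / 1200 by positivity)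
      have heq : Real.log ((6 * (n : ℝ) / r) / 1200)
          = Real.log (6 * (n : ℝ) / r) - Real.log 1200 := by
        rw [Real.log_div (ne_of_gt ht0) (by norm_num)]
      rw [heq] at h
      linarith
    have hsplit : Real.log (6 * (n : ℝ)) = Real.log (6 * (n : ℝ) / r) + Real.log r := by
      rw [← Real.log_mul (ne_of_gt ht0) (ne_of_gt hr0)]
      congr 1
      field_simp
    have hlog1200 : (1 : ℝ) ≤ Real.log 1200 := by
      rw [Real.le_log_iff_exp_le (by norm_num)]
      have := Real.exp_one_lt_d9
      linarith
    have hkey : (r : ℝ) * Real.log (6 * (n : ℝ) / r) ≤ (n : ℝ) / 200 * Real.log 1200 := by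
      have h1 : (r : ℝ) * Real.log (6 * (n : ℝ) / r)
          ≤ (r : ℝ) * ((6 * (n : ℝ) / r) / 1200 - 1 + Real.log 1200) :=
        mul_le_mul_of_nonneg_left hlogt (le_of_lt hr0)
      have h4 : (r : ℝ) * ((6 * (n : ℝ) / r) / 1200 - 1 + Real.log 1200)
          = (n : ℝ) / 200 - r + r * Real.log 1200 := by
        field_simp; ring
      have h3 : (r : ℝ) * (Real.log 1200 - 1) ≤ (n : ℝ) / 200 * (Real.log 1200 - 1) := by
        apply mul_le_mul_of_nonneg_right (le_of_lt hr200)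
        linarith
      rw [h4] at h1
      nlinarith [h1, h3]
    have hnum : (16 : ℝ) * Real.log 1200 < 200 * Real.log 2 := by
      have h12 : ((1200 : ℝ) ^ 16) < (2 : ℝ) ^ 200 := by norm_num
      have := Real.log_lt_log (by positivity) h12
      rw [Real.log_pow, Real.log_pow] at this
      push_cast at this
      linarith
    have hstrict : (n : ℝ) / 200 * Real.log 1200 < (n : ℝ) * Real.log c := by
      have hl2 : (0:ℝ) < Real.log 2 := Real.log_pos (by norm_num)
      have h1 : (1/200 : ℝ) * Real.log 1200 < (1/16 : ℝ) * Real.log 2 := by linarith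
      have h2 : (n : ℝ) / 200 * Real.log 1200 = (n:ℝ) * ((1/200 : ℝ) * Real.log 1200) := by ring
      rw [h2]
      have h3 : (n:ℝ) * ((1/200 : ℝ) * Real.log 1200) < (n:ℝ) * ((1/16 : ℝ) * Real.log 2) := by
        apply mul_lt_mul_of_pos_left h1 hn0
      have h4 : (n:ℝ) * ((1/16 : ℝ) * Real.log 2) ≤ (n:ℝ) * Real.log c :=
        mul_le_mul_of_nonneg_left hlogc (le_of_lt hn0)
      linarith
    have hlogfinal : Real.log ((6 * (n : ℝ)) ^ r) < Real.log (c ^ n * (r:ℝ) ^ r) := by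
      have hL : Real.log ((6 * (n : ℝ)) ^ r) = (r : ℝ) * Real.log (6 * (n : ℝ)) := by
        rw [Real.log_pow]
      have hR : Real.log (c ^ n * (r:ℝ) ^ r)
          = (n : ℝ) * Real.log c + (r : ℝ) * Real.log r := by
        rw [Real.log_mul (by positivity) (by positivity), Real.log_pow, Real.log_pow]
      rw [hL, hR, hsplit]
      have := hkey.trans_lt hstrict
      linarith [this]
    have hfinal : (6 * (n : ℝ)) ^ r < c ^ n * (r:ℝ) ^ r := by
      have hA : (0:ℝ) < (6 * (n : ℝ)) ^ r := by positivity
      have hB : (0:ℝ) < c ^ n * (r:ℝ) ^ r := by positivity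
      exact (Real.log_lt_log_iff hA hB).mp hlogfinal
    have : ((m.choose r : ℝ)) * (r : ℝ) ^ r < c ^ n * (r:ℝ) ^ r := lt_of_le_of_lt hCb hfinal
    have hrr : (0:ℝ) < (r : ℝ) ^ r := by positivity
    have hCC : ((m.choose r : ℝ)) < c ^ n := by
      exact lt_of_mul_lt_mul_right this (le_of_lt hrr)
    linarith
  · -- large c case : use symmetry, C(m, n-1) ≤ (3m/(n-1))^(n-1) ≤ c^(n-1)
    set k : ℕ := n - 1 with hk
    have hkc : (k : ℝ) = (n : ℝ) - 1 := by
      have : (k : ℕ) + 1 = n := by omega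
      have := congrArg (fun x : ℕ => (x : ℝ)) this
      push_cast at this
      linarith
    have hsymm : m.choose r = m.choose k := by
      have hrm : r ≤ m := by omega
      have : m - r = k := by omega
      rw [← this, Nat.choose_symm hrm]
    have h3m : 3 * (m : ℝ) ≤ c * (k : ℝ) := by
      rw [hmc, hkc]
      -- 3(n + r - 1) ≤ c(n-1), with r < nc/2000, n ≤ 2(n-1), c > 10
      have hc0 : (0:ℝ) < c := by linarith
      have p1 : 2 * c ≤ c * (n : ℝ) := by
        have := mul_le_mul_of_nonneg_left hnR hc0.le
        linarith
      have p2 : (0:ℝ) ≤ (c - 10) * ((n:ℝ) - 1) :=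
        mul_nonneg (by linarith) (by linarith)
      linarith [p1, p2, hrs]
    have hCb : ((m.choose k : ℝ)) * (k : ℝ) ^ k ≤ (c * (k : ℝ)) ^ k := by
      calc ((m.choose k : ℝ)) * (k : ℝ) ^ k ≤ (3 * (m : ℝ)) ^ k := choose_mul_le m k
        _ ≤ (c * (k : ℝ)) ^ k := pow_le_pow_left₀ (by positivity) h3m k
    have hkk : (0:ℝ) < (k : ℝ) ^ k := by
      have : (1:ℝ) ≤ (k:ℝ) := by rw [hkc]; linarith
      positivity
    have hCc : ((m.choose k : ℝ)) ≤ c ^ k := by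
      have : (c * (k : ℝ)) ^ k = c ^ k * (k : ℝ) ^ k := mul_pow _ _ _
      rw [this] at hCb
      exact le_of_mul_le_mul_right hCb hkk
    have hck : c ^ k < c ^ n := pow_lt_pow_right₀ hc1 (by omega)
    rw [hsymm] at hcnt
    linarith
end

section
/- In the robust code (super cells g_1,...,g_L with levels h_i, decoding F_d = (∑_{i=1}^L i·h_i + ∑_{i<w} a_i) mod L where w = ∑ h_i), for any super-cell state with all h_i ≤ (q-1)·⌊n/L⌋ - 1, the update vector is (1 + a_w, 2 + a_w, ..., L + a_w) mod L, and hence the update diversity is exactly L. -/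
/-- The weight of a super-cell state: the sum of the super-cell levels. -/
def wt {L : ℕ} (h : Fin L → ℕ) : ℕ := ∑ i, h i

/-- The decoding function of the robust code (Construction 6):
`F_d = (∑_{i=1}^L i·h_i + ∑_{i<w} a_i) mod L`, where `h` is the super-cell state. -/
def Fd {L : ℕ} (a : ℕ → ZMod L) (h : Fin L → ℕ) : ZMod L :=
  ∑ i : Fin L, (((i : ℕ) + 1 : ℕ) : ZMod L) * (h i : ZMod L) + ∑ i ∈ Finset.range (wt h), a i

/-- `e_i(h) = F_d(N_i(h)) - F_d(h)`, where `N_i(h)` increments super cell `i` by one. -/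
def eVec {L : ℕ} (a : ℕ → ZMod L) (h : Fin L → ℕ) (i : Fin L) : ZMod L :=
  Fd a (Function.update h i (h i + 1)) - Fd a h

lemma wt_update {L : ℕ} (h : Fin L → ℕ) (i : Fin L) :
    wt (Function.update h i (h i + 1)) = wt h + 1 := by
  unfold wt
  rw [Finset.sum_update_of_mem (Finset.mem_univ i),
    Finset.sum_eq_add_sum_sdiff_singleton_of_mem (Finset.mem_univ i) h]
  ring

lemma eVec_eq {L : ℕ} (a : ℕ → ZMod L) (h : Fin L → ℕ) (i : Fin L) :
    eVec a h i = (((i : ℕ) + 1 : ℕ) : ZMod L) + a (wt h) := by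
  unfold eVec Fd
  rw [wt_update, Finset.sum_range_succ]
  rw [Finset.sum_eq_add_sum_sdiff_singleton_of_mem (Finset.mem_univ i)
      (fun j => (((j : ℕ) + 1 : ℕ) : ZMod L) * ((Function.update h i (h i + 1) j : ℕ) : ZMod L)),
    Finset.sum_eq_add_sum_sdiff_singleton_of_mem (Finset.mem_univ i)
      (fun j => (((j : ℕ) + 1 : ℕ) : ZMod L) * ((h j : ℕ) : ZMod L))]
  have hrest : ∑ j ∈ Finset.univ \ {i},
      (((j : ℕ) + 1 : ℕ) : ZMod L) * ((Function.update h i (h i + 1) j : ℕ) : ZMod L)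
      = ∑ j ∈ Finset.univ \ {i}, (((j : ℕ) + 1 : ℕ) : ZMod L) * ((h j : ℕ) : ZMod L) := by
    refine Finset.sum_congr rfl fun j hj => ?_
    rw [Function.update_of_ne (by simpa using (Finset.mem_sdiff.mp hj).2)]
  rw [hrest, Function.update_self]
  push_cast
  ring

/-- Lemma 3: in the robust code, for any super-cell state `h` with all levels
`≤ (q-1)·⌊n/L⌋ - 1`, the update vector is `(1 + a_w, 2 + a_w, …, L + a_w) mod L`
(where `w = ∑ h_i`), and hence the update diversity is exactly `L`. -/
theorem stmt17 (n q L : ℕ) (hL : 0 < L) (hq : 2 ≤ q) (hLn : L ≤ n)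
    (a : ℕ → ZMod L) (h : Fin L → ℕ)
    (hh : ∀ i, h i ≤ (q - 1) * (n / L) - 1) :
    (∀ i : Fin L, eVec a h i = (((i : ℕ) + 1 : ℕ) : ZMod L) + a (wt h)) ∧
    (Finset.univ.image fun i => eVec a h i).card = L := by
  refine ⟨eVec_eq a h, ?_⟩
  haveI : NeZero L := ⟨hL.ne'⟩
  have hinj : Function.Injective fun i : Fin L => eVec a h i := by
    intro i j hij
    simp only [eVec_eq, add_left_injective] at hij
    have : ((i : ℕ) : ZMod L) = ((j : ℕ) : ZMod L) := by
      have := add_right_cancel hij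
      push_cast at this ⊢
      linear_combination this
    exact Fin.ext (by
      have := (ZMod.natCast_eq_natCast_iff' _ _ _).mp this
      simpa [Nat.mod_eq_of_lt i.isLt, Nat.mod_eq_of_lt j.isLt] using this)
  rw [Finset.card_image_of_injective _ hinj]
  simp
end

section
/- Let a_0, a_1, ..., a_{n(q-1)-1} be i.i.d. uniform random variables on Z/LZ. In the robust code, for any fixed rewrite sequence, conditioned on all previous increments, the index of the super cell incremented at a rewrite occurring at weight w (with all h_i ≤ (q-1)⌊n/L⌋ - 1) is uniform on {1,...,L} and independent of the indices incremented at all previous rewrites. -/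
/-- Lemma 2 (abstract form): let `a_0, …, a_{M-1}` (with `M = n(q-1)`) be i.i.d.
uniform on `ℤ/Lℤ`, modeled by counting over all `a : Fin M → ZMod L`. A rewrite
occurring at weight `w k` (the weights `w k` of successive rewrites are distinct)
increments the super cell of index `I a k = t_k - a_{w k} (mod L)`, where the target
residue `t_k` may depend arbitrarily on the indices incremented at previous rewrites.
Then the incremented indices are uniform on `ℤ/Lℤ` and mutually independent: every
outcome pattern `y` of indices is realized by exactly a `1/L^m` fraction of the `a`'s. -/
theorem stmt19 (L M m : ℕ) (hL : 0 < L)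
    (w : Fin m → Fin M) (hw : Function.Injective w)
    (t : (k : Fin m) → (Fin (k : ℕ) → ZMod L) → ZMod L)
    (I : (Fin M → ZMod L) → Fin m → ZMod L)
    (hI : ∀ a : Fin M → ZMod L, ∀ k : Fin m,
      I a k = t k (fun j : Fin (k : ℕ) => I a ⟨(j : ℕ), lt_trans j.isLt k.isLt⟩)
        - a (w k)) :
    ∀ y : Fin m → ZMod L,
      Nat.card {a : Fin M → ZMod L // ∀ k, I a k = y k} * L ^ m = L ^ M := by
  intro y
  haveI : NeZero L := ⟨hL.ne'⟩
  set c : Fin m → ZMod L :=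
    fun k => t k (fun j : Fin (k : ℕ) => y ⟨(j : ℕ), lt_trans j.isLt k.isLt⟩) - y k with hc
  -- equivalence of conditions
  have key : ∀ a : Fin M → ZMod L, (∀ k, I a k = y k) ↔ (∀ k, a (w k) = c k) := by
    intro a
    constructor
    · intro h k
      have := hI a k
      rw [h k] at this
      simp only [hc]
      have hprev : (fun j : Fin (k : ℕ) => I a ⟨(j : ℕ), lt_trans j.isLt k.isLt⟩)
          = (fun j : Fin (k : ℕ) => y ⟨(j : ℕ), lt_trans j.isLt k.isLt⟩) := by
        funext j; exact h _
      rw [hprev] at this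
      linear_combination this
    · intro h
      have main : ∀ n, ∀ hn : n < m, I a ⟨n, hn⟩ = y ⟨n, hn⟩ := by
        intro n
        induction n using Nat.strong_induction_on with
        | _ n ih =>
          intro hn
          have hprev : (fun j : Fin n => I a ⟨(j : ℕ),
                lt_trans j.isLt (show n < m from hn)⟩)
              = (fun j : Fin n => y ⟨(j : ℕ),
                lt_trans j.isLt (show n < m from hn)⟩) := by
            funext j; exact ih j j.isLt _
          rw [hI a ⟨n, hn⟩, hprev, h ⟨n, hn⟩, hc]
          ring
      intro k
      exact main k.1 k.2
  have hcard1 : Nat.card {a : Fin M → ZMod L // ∀ k, I a k = y k}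
      = Nat.card {a : Fin M → ZMod L // ∀ k, a (w k) = c k} :=
    Nat.card_congr (Equiv.subtypeEquivRight key)
  -- count solutions of a (w k) = c k
  let e : {a : Fin M → ZMod L // ∀ k, a (w k) = c k}
      ≃ ({x : Fin M // x ∉ Set.range w} → ZMod L) :=
    { toFun := fun a x => a.1 x.1
      invFun := fun f =>
        ⟨fun x => if h : x ∈ Set.range w then c ((Equiv.ofInjective w hw).symm ⟨x, h⟩)
          else f ⟨x, h⟩, by
          intro k
          have hk : w k ∈ Set.range w := ⟨k, rfl⟩
          simp [hk]⟩
      left_inv := by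
        intro a
        apply Subtype.ext
        funext x
        by_cases h : x ∈ Set.range w
        · obtain ⟨k, rfl⟩ := h
          have hk : w k ∈ Set.range w := ⟨k, rfl⟩
          simp [hk, a.2 k]
        · simp [h]
      right_inv := by
        intro f
        funext x
        simp [x.2] }
  have hrange : Fintype.card {x : Fin M // x ∈ Set.range w} = m := by
    have h1 : Fintype.card (Set.range w) = Fintype.card (Fin m) :=
      Set.card_range_of_injective hw
    rw [Fintype.card_fin] at h1
    exact (Fintype.card_congr (Equiv.refl _)).trans h1
  have hcompl : Fintype.card {x : Fin M // x ∉ Set.range w} = M - m := by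
    rw [Fintype.card_subtype_compl, hrange, Fintype.card_fin]
  have hcard2 : Nat.card {a : Fin M → ZMod L // ∀ k, a (w k) = c k} = L ^ (M - m) := by
    rw [Nat.card_congr e, Nat.card_eq_fintype_card, Fintype.card_fun, ZMod.card, hcompl]
  have hmM : m ≤ M := by
    have := Fintype.card_le_of_injective w hw
    simpa using this
  rw [hcard1, hcard2, ← pow_add, Nat.sub_add_cancel hmM]
end
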